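/- For every nonnegative integer n: sum_{i=0}^n (z;q)_i/(q;q)_i * q^i = (zq;q)_n/(q;q)_n. -/

import Mathlib

open Finset

variable {F : Type*} [Field F]

/-- `(q;q)_n = (1-q)(1-q^2)...(1-q^n)` -/
def qfac (q : F) (n : ℕ) : F := ∏ j ∈ Finset.range n, (1 - q ^ (j + 1))

/-- `(z;q)_k = (1-z)(1-zq)...(1-zq^{k-1})` -/
def qpoch (z q : F) (k : ℕ) : F := ∏ j ∈ Finset.range k, (1 - z * q ^ j)

/-- Gaussian binomial coefficient `[n choose k]_q` -/
def qbinom (q : F) (n k : ℕ) : F := qfac q n / (qfac q k * qfac q (n - k))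

/-- Sum over weakly increasing `m`-tuples `lo ≤ i_1 ≤ ... ≤ i_m ≤ n` of
`∏_j q^{i_j}/(1-q^{i_j})` (equal to `1` when `m = 0`). -/
def chainSum (q : F) (lo n m : ℕ) : F :=
  ∑ c ∈ Finset.univ.filter (fun c : Fin m → Fin (n + 1) =>
      (∀ j k : Fin m, j ≤ k → c j ≤ c k) ∧ ∀ j, lo ≤ (c j : ℕ)),
    ∏ j, q ^ (c j : ℕ) / (1 - q ^ (c j : ℕ))

/-- Complete homogeneous symmetric function `h_m` of the variables
`x lo, x (lo+1), ..., x n`. -/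
def hSum {R : Type*} [CommRing R] (x : ℕ → R) (lo n m : ℕ) : R :=
  ∑ c ∈ Finset.univ.filter (fun c : Fin m → Fin (n + 1) =>
      (∀ j k : Fin m, j ≤ k → c j ≤ c k) ∧ ∀ j, lo ≤ (c j : ℕ)),
    ∏ j, x (c j : ℕ)

lemma qfac_succ (q : F) (n : ℕ) : qfac q (n + 1) = qfac q n * (1 - q ^ (n + 1)) :=
  prod_range_succ _ n

lemma qpoch_succ (z q : F) (n : ℕ) : qpoch z q (n + 1) = qpoch z q n * (1 - z * q ^ n) :=
  prod_range_succ _ n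

lemma qpoch_succ_eq_one_sub_mul (z q : F) (n : ℕ) :
    qpoch z q (n + 1) = (1 - z) * qpoch (z * q) q n := by
  rw [qpoch, prod_range_succ', pow_zero, mul_one, mul_comm]
  simp only [qpoch, pow_succ, mul_assoc, mul_comm q]

lemma qfac_ne_zero {q : F} {n : ℕ} (hq : ∀ i ∈ Icc 1 n, q ^ i ≠ 1) : qfac q n ≠ 0 :=
  prod_ne_zero_iff.mpr fun j hj ↦
    sub_ne_zero.mpr (hq (j + 1) (by simpa [Nat.succ_le_iff] using hj)).symm

/-- The induction step rests on `(1 - q^(n+1)) + (1 - z) q^(n+1) = 1 - z q^(n+1)`. -/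
lemma qpoch_mul_div_qfac_add (z q : F) (n : ℕ) (hq : qfac q (n + 1) ≠ 0) :
    qpoch (z * q) q n / qfac q n + qpoch z q (n + 1) / qfac q (n + 1) * q ^ (n + 1)
      = qpoch (z * q) q (n + 1) / qfac q (n + 1) := by
  rw [qfac_succ] at hq ⊢
  obtain ⟨hfac, hlast⟩ := mul_ne_zero_iff.mp hq
  rw [qpoch_succ_eq_one_sub_mul, qpoch_succ]
  field_simp
  ring

theorem fu_lascoux_eq9 (q z : F) (n : ℕ) (hq : ∀ i ∈ Finset.Icc 1 n, q ^ i ≠ 1) :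
    ∑ i ∈ Finset.range (n + 1), qpoch z q i / qfac q i * q ^ i
      = qpoch (z * q) q n / qfac q n := by
  induction n with
  | zero => simp [qpoch, qfac]
  | succ n ih =>
    have hq_le : ∀ i ∈ Icc 1 n, q ^ i ≠ 1 := fun i hi ↦
      hq i (Icc_subset_Icc_right n.le_succ hi)
    rw [sum_range_succ, ih hq_le, qpoch_mul_div_qfac_add z q n (qfac_ne_zero hq)]
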